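/- Let X be a nonempty finite set, c : X×X → [0,∞) with c(x,x) = 0 for all x, p̂ ∈ Δ^X, f : X → ℝ, and θ ≥ 0. Define W_c(p, p̂) as the minimum over couplings γ of (p, p̂) of Σ_{x,y} c(x,y)·γ(x,y). Then the supremum over p ∈ Δ^X with W_c(p, p̂) ≤ θ of Σ_x p(x)·f(x) equals the minimum over λ ≥ 0 of ( λθ + Σ_x p̂(x)·max_{y∈X} ( f(y) − λ·c(y,x) ) ). -/

import Mathlib

/-!
Weak duality is the pointwise inequality `f x ≤ λ c(x, y) + f^{λc}(y)` integrated against a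
coupling. For the converse, the pairs (cost, expected value) of all plans with second marginal `p̂`
form a compact convex set `K ⊆ ℝ²`: the first marginal is left free, so each plan is a coupling of
its own row sums with `p̂`. Separating `(θ, V + ε)`, `V` the primal value, from
`K + ([0, ∞) × (-∞, 0])` yields a multiplier `λ ≥ 0`; the separating line is not vertical because
the diagonal plan has cost `0 ≤ θ`. The Lagrangian `value - λ·cost` is maximised over plans by
sending each `y` to a maximiser of `z ↦ f z - λ c(z, y)`, and that maximum is `Σ p̂ f^{λc}`, so the
dual objective at `λ` is below `V + ε`. Finally the dual objective is continuous and stops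
decreasing once `λ` exceeds every ratio `(f z - f x) / c(z, x)`, so its infimum is attained.
-/

open Finset
open scoped Pointwise

theorem apply_nonpos_of_forall_add_smul_lt {E : Type*} [AddCommGroup E] [Module ℝ E]
    (φ : E →ₗ[ℝ] ℝ) {a d : E} {u : ℝ} (h : ∀ t : ℝ, 0 ≤ t → φ (a + t • d) < u) :
    φ d ≤ 0 := by
  by_contra! hd
  have hau : φ a < u := by simpa using h 0 le_rfl
  have := h ((u - φ a) / φ d) (div_nonneg (sub_nonneg.2 hau.le) hd.le)
  rw [map_add, map_smul, smul_eq_mul, div_mul_cancel₀ _ hd.ne'] at this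
  linarith

theorem exists_lagrange_multiplier {K : Set (ℝ × ℝ)} (hK : IsCompact K) (hKc : Convex ℝ K)
    {θ V : ℝ} (hslater : ∃ q ∈ K, q.1 ≤ θ) (hV : ∀ q ∈ K, q.1 ≤ θ → q.2 < V) :
    ∃ lam : ℝ, 0 ≤ lam ∧ ∀ q ∈ K, q.2 + lam * (θ - q.1) < V := by
  set Q : Set (ℝ × ℝ) := Set.Ici 0 ×ˢ Set.Iic 0
  have hout : (θ, V) ∉ K + Q := by
    rintro ⟨q, hq, d, ⟨hd₁ : 0 ≤ d.1, hd₂ : d.2 ≤ 0⟩, hqd⟩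
    have h₁ : q.1 + d.1 = θ := congrArg Prod.fst hqd
    have h₂ : q.2 + d.2 = V := congrArg Prod.snd hqd
    exact (hV q hq (by linarith)).not_ge (by linarith)
  obtain ⟨φ, u, hlt, hu⟩ := geometric_hahn_banach_closed_point
    (hKc.add ((convex_Ici (0 : ℝ)).prod (convex_Iic (0 : ℝ))))
    (isClosed_Ici.prod isClosed_Iic |>.add_left_of_isCompact hK) hout
  obtain ⟨α, β, hφ⟩ : ∃ α β : ℝ, ∀ q : ℝ × ℝ, φ q = α * q.1 + β * q.2 := by
    refine ⟨φ (1, 0), φ (0, 1), fun q => ?_⟩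
    conv_lhs => rw [show q = q.1 • ((1 : ℝ), (0 : ℝ)) + q.2 • ((0 : ℝ), (1 : ℝ)) by ext <;> simp]
    simp only [map_add, map_smul, smul_eq_mul, mul_comm]
  obtain ⟨q₀, hq₀, hq₀θ⟩ := hslater
  have hα : α ≤ 0 := by
    simpa [hφ] using apply_nonpos_of_forall_add_smul_lt (φ : ℝ × ℝ →ₗ[ℝ] ℝ)
      fun t ht => hlt _ ⟨q₀, hq₀, t • (1, 0), by simp [ht], rfl⟩
  have hβ : 0 ≤ β := by
    simpa [hφ] using apply_nonpos_of_forall_add_smul_lt (φ : ℝ × ℝ →ₗ[ℝ] ℝ) (d := (0, -1))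
      fun t ht => hlt _ ⟨q₀, hq₀, t • (0, -1), by simp [ht], rfl⟩
  -- a vertical line cannot separate `(θ, V)` from `(θ, q₀.2) ∈ K + Q`
  have hβ' : 0 < β := by
    refine hβ.lt_of_ne fun h0 => ?_
    have := (hlt _ ⟨q₀, hq₀, (θ - q₀.1, 0), by simp [hq₀θ], rfl⟩).trans hu
    simp [hφ, ← h0] at this
  refine ⟨-α / β, div_nonneg (neg_nonneg.2 hα) hβ, fun q hq => ?_⟩
  have := (hlt q ⟨q, hq, 0, by simp, add_zero q⟩).trans hu
  rw [hφ, hφ] at this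
  rw [div_mul_eq_mul_div, add_div' _ _ _ hβ'.ne', div_lt_iff₀ hβ']
  linarith

theorem exists_isMinOn_Ici_of_monotoneOn {g : ℝ → ℝ} (hg : Continuous g) {b : ℝ}
    (hmono : MonotoneOn g (Set.Ici b)) (a : ℝ) : ∃ x ∈ Set.Ici a, IsMinOn g (Set.Ici a) x := by
  obtain ⟨x, hx, hmin⟩ := isCompact_Icc.exists_isMinOn
    (Set.nonempty_Icc.2 (le_max_left a b)) hg.continuousOn
  refine ⟨x, hx.1, fun y hy => ?_⟩
  rcases le_total y (max a b) with h | h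
  · exact hmin ⟨hy, h⟩
  · exact (hmin ⟨le_max_left a b, le_rfl⟩).trans
      (hmono (le_max_right a b) ((le_max_right a b).trans h) h)

section Transport

variable {X : Type*} [Fintype X]

def transportCost (c : X → X → ℝ) : (X → X → ℝ) →ₗ[ℝ] ℝ where
  toFun γ := ∑ x, ∑ y, c x y * γ x y
  map_add' γ γ' := by simp only [Pi.add_apply, mul_add, sum_add_distrib]
  map_smul' a γ := by
    simp only [Pi.smul_apply, smul_eq_mul, mul_sum, RingHom.id_apply, mul_left_comm]

theorem transportCost_apply (c γ : X → X → ℝ) :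
    transportCost c γ = ∑ x, ∑ y, c x y * γ x y := rfl

theorem transportCost_nonneg {c γ : X → X → ℝ} (hc : ∀ x y, 0 ≤ c x y) (hγ : ∀ x y, 0 ≤ γ x y) :
    0 ≤ transportCost c γ :=
  sum_nonneg fun x _ => sum_nonneg fun y _ => mul_nonneg (hc x y) (hγ x y)

def diagonalPlan [DecidableEq X] (q : X → ℝ) : X → X → ℝ := fun x y => if x = y then q x else 0

theorem transportCost_diagonalPlan [DecidableEq X] {c : X → X → ℝ} (hc : ∀ x, c x x = 0)
    (q : X → ℝ) : transportCost c (diagonalPlan q) = 0 := by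
  simp [transportCost_apply, diagonalPlan, hc]

theorem sum_diagonalPlan_right [DecidableEq X] (q : X → ℝ) (x : X) :
    ∑ y, diagonalPlan q x y = q x := by
  simp [diagonalPlan]

theorem transportCost_const_right (f : X → ℝ) (γ : X → X → ℝ) :
    transportCost (fun x _ => f x) γ = ∑ x, (∑ y, γ x y) * f x := by
  simp only [transportCost_apply, ← mul_sum, mul_comm]

def transportPlansTo (q : X → ℝ) : Set (X → X → ℝ) :=
  {γ | (∀ x y, 0 ≤ γ x y) ∧ ∀ y, ∑ x, γ x y = q y}

theorem diagonal_mem_transportPlansTo [DecidableEq X] {q : X → ℝ} (hq : ∀ x, 0 ≤ q x) :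
    diagonalPlan q ∈ transportPlansTo q := by
  refine ⟨fun x y => ?_, fun y => ?_⟩
  · by_cases h : x = y <;> simp [diagonalPlan, h, hq]
  · simp [diagonalPlan]

theorem convex_transportPlansTo (q : X → ℝ) : Convex ℝ (transportPlansTo q) := by
  rintro γ ⟨hγ, hγq⟩ γ' ⟨hγ', hγ'q⟩ a b ha hb hab
  refine ⟨fun x y => ?_, fun y => ?_⟩
  · simp only [Pi.add_apply, Pi.smul_apply, smul_eq_mul]
    exact add_nonneg (mul_nonneg ha (hγ x y)) (mul_nonneg hb (hγ' x y))
  · simp only [Pi.add_apply, Pi.smul_apply, smul_eq_mul, sum_add_distrib, ← mul_sum, hγq, hγ'q]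
    rw [← add_mul, hab, one_mul]

theorem isCompact_transportPlansTo (q : X → ℝ) : IsCompact (transportPlansTo q) := by
  refine (isCompact_Icc (a := 0) (b := fun _ y => q y)).of_isClosed_subset ?_ ?_
  · simp only [transportPlansTo, Set.ofPred_and, Set.ofPred_forall]
    refine .inter (isClosed_iInter fun x => isClosed_iInter fun y => ?_)
      (isClosed_iInter fun y => ?_)
    · exact isClosed_le continuous_const (by fun_prop)
    · exact isClosed_eq (by fun_prop) continuous_const
  · rintro γ ⟨hγ, hγq⟩
    refine ⟨fun x y => hγ x y, fun x y => ?_⟩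
    change γ x y ≤ q y
    rw [← hγq y]
    exact single_le_sum (fun x' _ => hγ x' y) (mem_univ x)

def couplingCosts (c : X → X → ℝ) (p q : X → ℝ) : Set ℝ :=
  {t | ∃ γ : X → X → ℝ, (∀ x y, 0 ≤ γ x y) ∧ (∀ x, ∑ y, γ x y = p x) ∧
    (∀ y, ∑ x, γ x y = q y) ∧ t = ∑ x, ∑ y, c x y * γ x y}

theorem transportCost_mem_couplingCosts (c : X → X → ℝ) {γ : X → X → ℝ} {q : X → ℝ}
    (hγ : γ ∈ transportPlansTo q) : transportCost c γ ∈ couplingCosts c (fun x => ∑ y, γ x y) q :=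
  ⟨γ, hγ.1, fun _ => rfl, hγ.2, rfl⟩

theorem zero_mem_couplingCosts_self {c : X → X → ℝ} (hc : ∀ x, c x x = 0) {q : X → ℝ}
    (hq : ∀ x, 0 ≤ q x) : 0 ∈ couplingCosts c q q := by
  classical
  have h := transportCost_mem_couplingCosts c (diagonal_mem_transportPlansTo hq)
  rwa [transportCost_diagonalPlan hc, funext (sum_diagonalPlan_right q)] at h

theorem bddBelow_couplingCosts {c : X → X → ℝ} (hc : ∀ x y, 0 ≤ c x y) (p q : X → ℝ) :
    BddBelow (couplingCosts c p q) :=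
  ⟨0, by rintro _ ⟨γ, hγ, -, -, rfl⟩; exact transportCost_nonneg hc hγ⟩

theorem couplingCosts_nonempty (c : X → X → ℝ) {p q : X → ℝ} (hp : p ∈ stdSimplex ℝ X)
    (hq : q ∈ stdSimplex ℝ X) : (couplingCosts c p q).Nonempty :=
  ⟨_, fun x y => p x * q y, fun x y => mul_nonneg (hp.1 x) (hq.1 y),
    fun x => by rw [← mul_sum, hq.2, mul_one], fun y => by rw [← sum_mul, hp.2, one_mul], rfl⟩

theorem rowSum_mem_stdSimplex {γ : X → X → ℝ} {q : X → ℝ} (hγ : γ ∈ transportPlansTo q)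
    (hq : q ∈ stdSimplex ℝ X) : (fun x => ∑ y, γ x y) ∈ stdSimplex ℝ X :=
  ⟨fun x => sum_nonneg fun y _ => hγ.1 x y, by rw [sum_comm]; simp only [hγ.2]; exact hq.2⟩

section CTransform

variable [Nonempty X]

def cTransform (c : X → X → ℝ) (f : X → ℝ) (lam : ℝ) (x : X) : ℝ :=
  univ.sup' univ_nonempty fun z => f z - lam * c z x

theorem sub_le_cTransform (c : X → X → ℝ) (f : X → ℝ) (lam : ℝ) (z x : X) :
    f z - lam * c z x ≤ cTransform c f lam x :=
  le_sup' (fun z => f z - lam * c z x) (mem_univ z)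

theorem le_cTransform {c : X → X → ℝ} (hc : ∀ x, c x x = 0) (f : X → ℝ) (lam : ℝ) (x : X) :
    f x ≤ cTransform c f lam x := by
  simpa [hc] using sub_le_cTransform c f lam x x

theorem continuous_cTransform (c : X → X → ℝ) (f : X → ℝ) (x : X) :
    Continuous fun lam => cTransform c f lam x :=
  Continuous.finset_sup'_apply _ fun _ _ => by fun_prop

theorem exists_cTransform_le {c : X → X → ℝ} (hc : ∀ x y, 0 ≤ c x y) (hcd : ∀ x, c x x = 0)
    (f : X → ℝ) : ∃ Λ, ∀ lam, Λ ≤ lam → ∀ mu x, cTransform c f lam x ≤ cTransform c f mu x := by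
  have hlarge : ∀ᶠ lam in Filter.atTop, ∀ z x, c z x = 0 ∨ f z - lam * c z x ≤ f x := by
    simp only [Filter.eventually_all]
    intro z x
    rcases (hc z x).eq_or_lt with h | h
    · exact .of_forall fun _ => .inl h.symm
    · filter_upwards [Filter.eventually_ge_atTop ((f z - f x) / c z x)] with lam hlam
      rw [div_le_iff₀ h] at hlam
      exact .inr (by linarith)
  obtain ⟨Λ, hΛ⟩ := Filter.eventually_atTop.1 hlarge
  refine ⟨Λ, fun lam hlam mu x => sup'_le _ _ fun z _ => ?_⟩
  rcases hΛ lam hlam z x with h | h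
  · simpa [h] using sub_le_cTransform c f mu z x
  · exact h.trans (le_cTransform hcd f mu x)

theorem transportCost_sub_le_sum_cTransform {c γ : X → X → ℝ} {q : X → ℝ}
    (hγ : γ ∈ transportPlansTo q) (f : X → ℝ) (lam : ℝ) :
    transportCost (fun x _ => f x) γ - lam * transportCost c γ ≤
      ∑ y, q y * cTransform c f lam y := calc
  _ = ∑ x, ∑ y, (f x - lam * c x y) * γ x y := by
    simp only [transportCost_apply, mul_sum, ← sum_sub_distrib]
    exact sum_congr rfl fun x _ => sum_congr rfl fun y _ => by ring
  _ ≤ ∑ x, ∑ y, cTransform c f lam y * γ x y :=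
    sum_le_sum fun x _ => sum_le_sum fun y _ =>
      mul_le_mul_of_nonneg_right (sub_le_cTransform c f lam x y) (hγ.1 x y)
  _ = ∑ y, q y * cTransform c f lam y := by
    rw [sum_comm]
    exact sum_congr rfl fun y _ => by rw [← mul_sum, hγ.2 y, mul_comm]

theorem exists_transportCost_sub_eq_sum_cTransform (c : X → X → ℝ) {q : X → ℝ}
    (hq : ∀ y, 0 ≤ q y) (f : X → ℝ) (lam : ℝ) :
    ∃ γ ∈ transportPlansTo q, transportCost (fun x _ => f x) γ - lam * transportCost c γ =
      ∑ y, q y * cTransform c f lam y := by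
  classical
  choose z _ hz using fun y => exists_mem_eq_sup' univ_nonempty fun z => f z - lam * c z y
  refine ⟨fun x y => if x = z y then q y else 0, ⟨fun x y => ?_, fun y => by simp⟩, ?_⟩
  · dsimp only
    split_ifs
    exacts [hq y, le_rfl]
  · simp only [transportCost_apply, mul_sum, ← sum_sub_distrib]
    rw [sum_comm]
    refine sum_congr rfl fun y _ => ?_
    simp only [mul_ite, mul_zero, sum_sub_distrib, sum_ite_eq', mem_univ, ↓reduceIte, cTransform,
      hz y]
    ring

def wassersteinDual (c : X → X → ℝ) (q f : X → ℝ) (θ lam : ℝ) : ℝ :=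
  lam * θ + ∑ x, q x * cTransform c f lam x

theorem exists_isMinOn_wassersteinDual {c : X → X → ℝ} (hc : ∀ x y, 0 ≤ c x y)
    (hcd : ∀ x, c x x = 0) {q : X → ℝ} (hq : ∀ x, 0 ≤ q x) (f : X → ℝ) {θ : ℝ} (hθ : 0 ≤ θ) :
    ∃ lam₀, 0 ≤ lam₀ ∧ IsMinOn (wassersteinDual c q f θ) (Set.Ici 0) lam₀ := by
  obtain ⟨Λ, hΛ⟩ := exists_cTransform_le hc hcd f
  have hmono : MonotoneOn (wassersteinDual c q f θ) (Set.Ici Λ) := fun lam hlam mu _ hle =>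
    add_le_add (mul_le_mul_of_nonneg_right hle hθ)
      (sum_le_sum fun x _ => mul_le_mul_of_nonneg_left (hΛ lam hlam mu x) (hq x))
  have hcont : Continuous (wassersteinDual c q f θ) :=
    (continuous_id.mul continuous_const).add
      (continuous_finsetSum _ fun x _ => continuous_const.mul (continuous_cTransform c f x))
  exact exists_isMinOn_Ici_of_monotoneOn hcont hmono 0

theorem sum_mul_le_wassersteinDual {c : X → X → ℝ} {p q : X → ℝ}
    (hp : p ∈ stdSimplex ℝ X) (hq : q ∈ stdSimplex ℝ X) (f : X → ℝ) {θ lam : ℝ} (hlam : 0 ≤ lam)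
    (hW : sInf (couplingCosts c p q) ≤ θ) :
    ∑ x, p x * f x ≤ wassersteinDual c q f θ lam := by
  have hlagr : ∀ t ∈ couplingCosts c p q,
      ∑ x, p x * f x - ∑ y, q y * cTransform c f lam y ≤ lam * t := by
    rintro _ ⟨γ, hγ, hγp, hγq, rfl⟩
    have := transportCost_sub_le_sum_cTransform (c := c) ⟨hγ, hγq⟩ f lam
    rw [transportCost_const_right, transportCost_apply] at this
    simp only [hγp] at this
    linarith
  have hinf : ∑ x, p x * f x - ∑ y, q y * cTransform c f lam y ≤
      lam * sInf (couplingCosts c p q) := by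
    rw [← smul_eq_mul, ← Real.sInf_smul_of_nonneg hlam]
    exact le_csInf ((couplingCosts_nonempty c hp hq).smul_set)
      (by rintro _ ⟨t, ht, rfl⟩; exact hlagr t ht)
  unfold wassersteinDual
  linarith [mul_le_mul_of_nonneg_left hW hlam]

theorem exists_wassersteinDual_lt {c : X → X → ℝ} (hcd : ∀ x, c x x = 0) {q : X → ℝ}
    (hq : ∀ x, 0 ≤ q x) (f : X → ℝ) {θ V : ℝ} (hθ : 0 ≤ θ)
    (hV : ∀ γ ∈ transportPlansTo q, transportCost c γ ≤ θ → transportCost (fun x _ => f x) γ < V) :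
    ∃ lam, 0 ≤ lam ∧ wassersteinDual c q f θ lam < V := by
  classical
  set Φ := (transportCost c).prod (transportCost fun x _ => f x)
  obtain ⟨lam, hlam, hK⟩ := exists_lagrange_multiplier
    ((isCompact_transportPlansTo q).image Φ.continuous_of_finiteDimensional)
    ((convex_transportPlansTo q).linear_image Φ)
    ⟨Φ (diagonalPlan q), ⟨_, diagonal_mem_transportPlansTo hq, rfl⟩,
      by simpa [Φ, transportCost_diagonalPlan hcd] using hθ⟩
    (by rintro _ ⟨γ, hγ, rfl⟩; exact hV γ hγ)
  obtain ⟨γ, hγ, hγeq⟩ := exists_transportCost_sub_eq_sum_cTransform c hq f lam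
  have := hK _ ⟨γ, hγ, rfl⟩
  simp only [Φ, LinearMap.prod_apply, Function.prod_apply] at this
  refine ⟨lam, hlam, ?_⟩
  unfold wassersteinDual
  linarith

end CTransform

end Transport

/-- **Strong duality for worst-case expectations over Wasserstein balls (finite spaces).**
For a cost `c ≥ 0` with `c(x,x) = 0`, nominal `p̂ ∈ Δ^X`, `f : X → ℝ` and radius `θ ≥ 0`,
`sup { Σ_x p(x) f(x) : p ∈ Δ^X, W_c(p,p̂) ≤ θ }
  = min_{λ ≥ 0} ( λθ + Σ_x p̂(x)·max_y ( f(y) − λ·c(y,x) ) )`,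
where `W_c(p,p̂)` is the minimal coupling cost between `p` and `p̂`. -/
theorem wasserstein_ball_duality_finite
    (X : Type*) [Fintype X] [Nonempty X]
    (c : X → X → ℝ) (hc0 : ∀ x y, 0 ≤ c x y) (hcd : ∀ x, c x x = 0)
    (phat : X → ℝ) (hphat : phat ∈ stdSimplex ℝ X)
    (f : X → ℝ) (θ : ℝ) (hθ : 0 ≤ θ) :
    let W : (X → ℝ) → ℝ := fun p =>
      sInf {t : ℝ | ∃ γ : X → X → ℝ,
        (∀ x y, 0 ≤ γ x y) ∧
        (∀ x, ∑ y, γ x y = p x) ∧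
        (∀ y, ∑ x, γ x y = phat y) ∧
        t = ∑ x, ∑ y, c x y * γ x y}
    IsLeast {y : ℝ | ∃ lam : ℝ, 0 ≤ lam ∧
        y = lam * θ + ∑ x, phat x *
              Finset.univ.sup' Finset.univ_nonempty (fun z => f z - lam * c z x)}
      (sSup {e : ℝ | ∃ p ∈ stdSimplex ℝ X, W p ≤ θ ∧ e = ∑ x, p x * f x}) := by
  intro W
  set S := {e : ℝ | ∃ p ∈ stdSimplex ℝ X, W p ≤ θ ∧ e = ∑ x, p x * f x}
  have weak : ∀ lam, 0 ≤ lam → ∀ e ∈ S, e ≤ wassersteinDual c phat f θ lam := by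
    rintro lam hlam _ ⟨p, hp, hWp, rfl⟩
    exact sum_mul_le_wassersteinDual hp hphat f hlam hWp
  have hS : S.Nonempty := ⟨_, phat, hphat,
    (csInf_le (bddBelow_couplingCosts hc0 _ _) (zero_mem_couplingCosts_self hcd hphat.1)).trans hθ,
    rfl⟩
  have feasible : ∀ γ ∈ transportPlansTo phat, transportCost c γ ≤ θ →
      transportCost (fun x _ => f x) γ ≤ sSup S := fun γ hγ hcost =>
    le_csSup ⟨_, weak 0 le_rfl⟩ ⟨_, rowSum_mem_stdSimplex hγ hphat,
      (csInf_le (bddBelow_couplingCosts hc0 _ _)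
        (transportCost_mem_couplingCosts c hγ)).trans hcost,
      transportCost_const_right f γ⟩
  obtain ⟨lam₀, hlam₀, hmin⟩ := exists_isMinOn_wassersteinDual hc0 hcd hphat.1 f hθ
  have strong : wassersteinDual c phat f θ lam₀ ≤ sSup S := le_of_forall_pos_lt_add fun ε hε => by
    obtain ⟨lam, hlam, hlt⟩ := exists_wassersteinDual_lt hcd hphat.1 f hθ fun γ hγ hcost =>
      (feasible γ hγ hcost).trans_lt (lt_add_of_pos_right _ hε)
    exact (hmin hlam).trans_lt hlt
  refine ⟨⟨lam₀, hlam₀, le_antisymm (csSup_le hS (weak lam₀ hlam₀)) strong⟩, ?_⟩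
  rintro _ ⟨lam, hlam, rfl⟩
  exact csSup_le hS (weak lam hlam)
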